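/- arXiv:1912.11518 — 2 statements merged into one kernel-verified Lean document; each statement's English description precedes it below -/
import Mathlib

section
/- Let A be a symmetric real n×n matrix. Let {B_α} be the union of {E_{jj}: 1≤j≤n} and {(E_{jk}+E_{kj})/√2: j<k}. Then ∑_α B_α A B_α = (1/2)A + (1/2)tr(A)·I_n. -/
/-!
With `P j k = E_jk + E_kj`, the basis consists of the `P j j / 2` and the `P j k / √2` for `j < k`.
Since `P j k = P k j`, the sum `∑_α B_α A B_α` is a quarter of the sum of `P j k * A * P j k` over
all ordered pairs `(j, k)`. Each such term expands to
`A_kj E_jk + A_kk E_jj + A_jj E_kk + A_jk E_kj`, and summing these gives `2 (Aᵀ + tr A • 1)`.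
-/

open Matrix

theorem Finset.sum_sum_eq_sum_diag_add_two_nsmul_sum_lt {ι M : Type*} [Fintype ι] [LinearOrder ι]
    [AddCommMonoid M] (g : ι → ι → M) (hg : ∀ j k, g j k = g k j) :
    ∑ j, ∑ k, g j k = ∑ j, g j j + 2 • ∑ j, ∑ k, if j < k then g j k else 0 := by
  have hgt : (∑ j, ∑ k, if k < j then g j k else 0) = ∑ j, ∑ k, if j < k then g j k else 0 := by
    rw [Finset.sum_comm]
    simp only [hg]
  have htrichotomy (j k : ι) : g j k = (if j = k then g j k else 0) +
      (if j < k then g j k else 0) + (if k < j then g j k else 0) := by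
    rcases lt_trichotomy j k with h | rfl | h
    · simp [h, h.ne, h.not_gt]
    · simp
    · simp [h, h.ne', h.not_gt]
  rw [Finset.sum_congr rfl fun j _ => Finset.sum_congr rfl fun k _ => htrichotomy j k, two_nsmul]
  nth_rw 2 [← hgt]
  simp only [Finset.sum_add_distrib, Finset.sum_ite_eq, Finset.mem_univ, if_true, add_assoc]

namespace Matrix

variable {ι R : Type*} [DecidableEq ι]

theorem sum_sum_single_apply_swap [Fintype ι] [AddCommMonoid R] (A : Matrix ι ι R) :
    ∑ j, ∑ k, single j k (A k j) = Aᵀ :=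
  sum_sum_single _

theorem sum_sum_single_diag [Fintype ι] [Semiring R] (A : Matrix ι ι R) :
    ∑ j : ι, ∑ k, single j j (A k k) = trace A • (1 : Matrix ι ι R) := by
  have (j : ι) : ∑ k, single j j (A k k) = single j j (trace A) :=
    (map_sum (singleAddMonoidHom (α := R) j j) _ _).symm
  simp only [this, sum_single_eq_diagonal, smul_one_eq_diagonal]

variable [Semiring R]

def symmSingle (j k : ι) : Matrix ι ι R := single j k 1 + single k j 1

theorem symmSingle_comm (j k : ι) : (symmSingle j k : Matrix ι ι R) = symmSingle k j :=
  add_comm _ _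

theorem symmSingle_self (j : ι) : (symmSingle j j : Matrix ι ι R) = (2 : R) • single j j 1 := by
  rw [symmSingle, two_smul]

theorem symmSingle_mul_mul_symmSingle [Fintype ι] (A : Matrix ι ι R) (j k : ι) :
    symmSingle j k * A * symmSingle j k =
      single j k (A k j) + single j j (A k k) + single k k (A j j) + single k j (A j k) := by
  simp only [symmSingle, add_mul, mul_add, single_mul_mul_single, one_mul, mul_one]
  abel

theorem sum_sum_symmSingle_mul_mul_symmSingle [Fintype ι] (A : Matrix ι ι R) :
    ∑ j, ∑ k, symmSingle j k * A * symmSingle j k = 2 • (Aᵀ + trace A • (1 : Matrix ι ι R)) := by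
  simp only [symmSingle_mul_mul_symmSingle, Finset.sum_add_distrib]
  rw [Finset.sum_comm (f := fun j k => single k k (A j j)),
    Finset.sum_comm (f := fun j k => single k j (A j k)),
    sum_sum_single_apply_swap, sum_sum_single_diag]
  abel

theorem sum_symmetricBasis_mul_mul_self {ι : Type*} [Fintype ι] [LinearOrder ι]
    (A : Matrix ι ι ℝ) :
    (∑ j, single j j (1 : ℝ) * A * single j j 1) +
      (∑ j, ∑ k, if j < k then
          ((1 / √2) • symmSingle j k) * A * ((1 / √2) • symmSingle j k) else 0)
      = (1 / 2 : ℝ) • Aᵀ + ((1 / 2 : ℝ) * trace A) • (1 : Matrix ι ι ℝ) := by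
  have hsq : (1 / √2 : ℝ) * (1 / √2) = 1 / 2 := by
    rw [div_mul_div_comm, one_mul, Real.mul_self_sqrt zero_le_two]
  have hdiag (j : ι) :
      symmSingle j j * A * symmSingle j j = (4 : ℝ) • (single j j 1 * A * single j j 1) := by
    rw [symmSingle_self, smul_mul_assoc, mul_smul_comm, smul_mul_assoc, smul_smul]
    norm_num
  have hsum := Finset.sum_sum_eq_sum_diag_add_two_nsmul_sum_lt
    (fun j k => symmSingle j k * A * symmSingle j k) fun j k => by simp only [symmSingle_comm j k]
  simp only [sum_sum_symmSingle_mul_mul_symmSingle, hdiag, ← Finset.smul_sum] at hsum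
  simp only [smul_mul_assoc, mul_smul_comm, smul_smul, hsq, ← smul_ite_zero, ← Finset.smul_sum]
  linear_combination (norm := module) (-1 / 4 : ℝ) • hsum

end Matrix

theorem stmt_3 (n : ℕ) (A : Matrix (Fin n) (Fin n) ℝ) (hA : Aᵀ = A) :
    (∑ j : Fin n, Matrix.single j j (1 : ℝ) * A * Matrix.single j j (1 : ℝ)) +
      (∑ j : Fin n, ∑ k : Fin n, if j < k then
          ((1 / Real.sqrt 2) • (Matrix.single j k (1 : ℝ) + Matrix.single k j (1 : ℝ))) * A *
            ((1 / Real.sqrt 2) • (Matrix.single j k (1 : ℝ) + Matrix.single k j (1 : ℝ)))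
        else 0)
      = (1 / 2 : ℝ) • A + ((1 / 2 : ℝ) * Matrix.trace A) • (1 : Matrix (Fin n) (Fin n) ℝ) := by
  have h := sum_symmetricBasis_mul_mul_self A
  rw [hA] at h
  exact h
end

section
/- Let U be a Haar-distributed random matrix in O(d), d ≥ 2, let K be its first two columns, C = [[0,1],[−1,0]], and Q = K C K^T with entries q_{αβ}. Then for all indices α, β, γ, δ: E[q_{αβ} q_{γδ}] = (2/(d(d−1)))·(δ_{αγ}δ_{βδ} − δ_{αδ}δ_{βγ}). -/
/-!
Left multiplication by a signed permutation matrix `diagonal s * P_σ` maps `q_{αβ}` to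
`s_α s_β q_{σα σβ}`, so by invariance of `μ` the moment `E[q_{αβ} q_{γδ}]` vanishes as soon as
some index occurs exactly once among `α, β, γ, δ` (flip the sign of that row), and
`E[q_{αβ}²]` is the same for all `α ≠ β` (the permutation group is 2-transitive). By Lagrange's
identity `∑_{α,β} q_{αβ}² = 2 (|u₁|² |u₂|² - ⟨u₁, u₂⟩²) = 2` for the orthonormal columns `u₁, u₂`, which
forces the common value `2 / (d (d - 1))`.
-/

open Matrix MeasureTheory

instance (d : ℕ) : MeasurableSpace (Matrix (Fin d) (Fin d) ℝ) :=
  (inferInstance : MeasurableSpace (Fin d → Fin d → ℝ))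

instance (d : ℕ) : BorelSpace (Matrix (Fin d) (Fin d) ℝ) := Pi.borelSpace

namespace Matrix

variable {m n R : Type*} [CommRing R]

def colWedge (U : Matrix m n R) (i j : n) (α β : m) : R :=
  U α i * U β j - U α j * U β i

@[simp]
lemma colWedge_self (U : Matrix m n R) (i j : n) (α : m) : U.colWedge i j α α = 0 := by
  simp [colWedge, mul_comm]

lemma colWedge_swap (U : Matrix m n R) (i j : n) (α β : m) :
    U.colWedge i j β α = -U.colWedge i j α β := by
  simp only [colWedge]; ring

lemma colWedge_diagonal_mul [Fintype m] [DecidableEq m] (s : m → R) (U : Matrix m n R)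
    (i j : n) (α β : m) :
    (diagonal s * U).colWedge i j α β = s α * s β * U.colWedge i j α β := by
  simp only [colWedge, diagonal_mul]; ring

lemma colWedge_permMatrix_mul [Fintype m] [DecidableEq m] (σ : Equiv.Perm m) (U : Matrix m n R)
    (i j : n) (α β : m) :
    (σ.permMatrix R * U).colWedge i j α β = U.colWedge i j (σ α) (σ β) := by
  simp [colWedge, PEquiv.toMatrix_toPEquiv_mul]

lemma sum_sum_colWedge_sq [Fintype m] (U : Matrix m n R) (i j : n) :
    ∑ α, ∑ β, U.colWedge i j α β ^ 2 =
      2 * ((∑ α, U α i ^ 2) * (∑ α, U α j ^ 2) - (∑ α, U α i * U α j) ^ 2) := by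
  have expand : ∀ α β, U.colWedge i j α β ^ 2 =
      U α i ^ 2 * U β j ^ 2 + U β i ^ 2 * U α j ^ 2 - 2 * (U α i * U α j) * (U β i * U β j) := by
    intro α β; simp only [colWedge]; ring
  simp only [expand, Finset.sum_add_distrib, Finset.sum_sub_distrib, ← Finset.mul_sum,
    ← Finset.sum_mul]
  ring

section OrthogonalGroup

variable {n : Type*} [Fintype n] [DecidableEq n]

lemma sum_sum_colWedge_sq_of_mem_orthogonalGroup {U : Matrix n n ℝ}
    (hU : U ∈ orthogonalGroup n ℝ) {i j : n} (hij : i ≠ j) :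
    ∑ α, ∑ β, U.colWedge i j α β ^ 2 = 2 := by
  have hUU : Uᵀ * U = 1 := (mem_orthogonalGroup_iff' n ℝ).mp hU
  have inner (k l : n) : ∑ α, U α k * U α l = if k = l then 1 else 0 := by
    simpa [Matrix.mul_apply, Matrix.one_apply] using congrFun (congrFun hUU k) l
  rw [sum_sum_colWedge_sq]
  simp only [sq, inner, hij]
  norm_num

lemma abs_colWedge_le_two_of_mem_orthogonalGroup {U : Matrix n n ℝ}
    (hU : U ∈ orthogonalGroup n ℝ) (i j α β : n) :
    |U.colWedge i j α β| ≤ 2 := by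
  have entry (k l : n) : |U k l| ≤ 1 := entry_norm_bound_of_unitary hU k l
  calc |U.colWedge i j α β| ≤ |U α i| * |U β j| + |U α j| * |U β i| := by
        rw [colWedge, ← abs_mul, ← abs_mul]; exact abs_sub _ _
    _ ≤ 1 * 1 + 1 * 1 := by gcongr <;> apply entry
    _ = 2 := by norm_num

end OrthogonalGroup

end Matrix

section Moments

noncomputable def wedgeMoment {d : ℕ} (μ : Measure (orthogonalGroup (Fin d) ℝ))
    (i j α β γ δ : Fin d) : ℝ :=
  ∫ U, U.1.colWedge i j α β * U.1.colWedge i j γ δ ∂μ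

variable {d : ℕ} {μ : Measure (orthogonalGroup (Fin d) ℝ)}

lemma measurable_colWedge (i j α β : Fin d) :
    Measurable fun U : orthogonalGroup (Fin d) ℝ => U.1.colWedge i j α β := by
  have entry (k l : Fin d) : Continuous fun U : orthogonalGroup (Fin d) ℝ => U.1 k l :=
    continuous_subtype_val.matrix_elem k l
  exact (((entry α i).mul (entry β j)).sub ((entry α j).mul (entry β i))).measurable

lemma integrable_colWedge_mul_colWedge [IsFiniteMeasure μ] (i j α β γ δ : Fin d) :
    Integrable (fun U : orthogonalGroup (Fin d) ℝ => U.1.colWedge i j α β * U.1.colWedge i j γ δ)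
      μ := by
  refine Integrable.of_bound ((measurable_colWedge i j α β).mul
    (measurable_colWedge i j γ δ)).aestronglyMeasurable (2 * 2) (ae_of_all _ fun U => ?_)
  rw [Real.norm_eq_abs, abs_mul]
  exact mul_le_mul (abs_colWedge_le_two_of_mem_orthogonalGroup U.2 ..)
    (abs_colWedge_le_two_of_mem_orthogonalGroup U.2 ..) (abs_nonneg _) zero_le_two

lemma wedgeMoment_swap_left (i j α β γ δ : Fin d) :
    wedgeMoment μ i j β α γ δ = -wedgeMoment μ i j α β γ δ := by
  simp only [wedgeMoment, colWedge_swap _ i j α β, neg_mul, integral_neg]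

lemma wedgeMoment_swap_right (i j α β γ δ : Fin d) :
    wedgeMoment μ i j α β δ γ = -wedgeMoment μ i j α β γ δ := by
  simp only [wedgeMoment, colWedge_swap _ i j γ δ, mul_neg, integral_neg]

lemma wedgeMoment_self_left (i j α γ δ : Fin d) : wedgeMoment μ i j α α γ δ = 0 := by
  simp [wedgeMoment]

lemma wedgeMoment_eq_integral_mul_left [μ.IsMulLeftInvariant] (A : orthogonalGroup (Fin d) ℝ)
    (i j α β γ δ : Fin d) :
    wedgeMoment μ i j α β γ δ = ∫ U, (A * U).1.colWedge i j α β * (A * U).1.colWedge i j γ δ ∂μ :=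
  (integral_mul_left_eq_self _ A).symm

lemma wedgeMoment_diagonal_mul [μ.IsMulLeftInvariant] {s : Fin d → ℝ} (hs : ∀ k, s k * s k = 1)
    (i j α β γ δ : Fin d) :
    wedgeMoment μ i j α β γ δ = s α * s β * s γ * s δ * wedgeMoment μ i j α β γ δ := by
  have hmem : diagonal s ∈ orthogonalGroup (Fin d) ℝ := by
    rw [mem_orthogonalGroup_iff, diagonal_transpose, diagonal_mul_diagonal]
    simp [hs]
  conv_lhs => rw [wedgeMoment_eq_integral_mul_left ⟨diagonal s, hmem⟩]
  rw [wedgeMoment, ← integral_const_mul]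
  congr 1 with U
  simp only [Submonoid.coe_mul, colWedge_diagonal_mul]
  ring

lemma wedgeMoment_perm [μ.IsMulLeftInvariant] (σ : Equiv.Perm (Fin d)) (i j α β γ δ : Fin d) :
    wedgeMoment μ i j (σ α) (σ β) (σ γ) (σ δ) = wedgeMoment μ i j α β γ δ := by
  have hmem : σ.permMatrix ℝ ∈ orthogonalGroup (Fin d) ℝ := by
    rw [mem_orthogonalGroup_iff, transpose_permMatrix, ← permMatrix_mul, inv_mul_cancel,
      permMatrix_one]
  rw [wedgeMoment_eq_integral_mul_left ⟨σ.permMatrix ℝ, hmem⟩ i j α β γ δ]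
  simp only [Submonoid.coe_mul, colWedge_permMatrix_mul]
  rfl

lemma wedgeMoment_eq_zero_of_ne_left [μ.IsMulLeftInvariant] {i j k β γ δ : Fin d}
    (hβ : k ≠ β) (hγ : k ≠ γ) (hδ : k ≠ δ) : wedgeMoment μ i j k β γ δ = 0 := by
  have flip := wedgeMoment_diagonal_mul (μ := μ) (s := fun x => if x = k then -1 else 1)
    (fun x => by split_ifs <;> norm_num) i j k β γ δ
  simp only [if_neg hβ.symm, if_neg hγ.symm, if_neg hδ.symm, if_true] at flip
  linarith

lemma wedgeMoment_eq_zero_of_ne_right [μ.IsMulLeftInvariant] {i j k α γ δ : Fin d}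
    (hα : k ≠ α) (hγ : k ≠ γ) (hδ : k ≠ δ) : wedgeMoment μ i j α k γ δ = 0 := by
  rw [← neg_eq_zero, ← wedgeMoment_swap_left, wedgeMoment_eq_zero_of_ne_left hα hγ hδ]

lemma wedgeMoment_eq_of_ne [μ.IsMulLeftInvariant] {i j α β γ δ : Fin d} (hαβ : α ≠ β)
    (hγδ : γ ≠ δ) : wedgeMoment μ i j α β α β = wedgeMoment μ i j γ δ γ δ := by
  obtain ⟨σ, rfl, rfl⟩ : ∃ σ : Equiv.Perm (Fin d), σ α = γ ∧ σ β = δ :=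
    MulAction.is_two_pretransitive_iff.mp (Equiv.Perm.isMultiplyPretransitive (Fin d) 2) hαβ hγδ
  exact (wedgeMoment_perm σ i j α β α β).symm

lemma sum_sum_wedgeMoment [IsProbabilityMeasure μ] {i j : Fin d} (hij : i ≠ j) :
    ∑ α, ∑ β, wedgeMoment μ i j α β α β = 2 := by
  have integrable := integrable_colWedge_mul_colWedge (μ := μ) i j
  have row (α : Fin d) : ∑ β, wedgeMoment μ i j α β α β =
      ∫ U, ∑ β, U.1.colWedge i j α β ^ 2 ∂μ := by
    simp only [sq, wedgeMoment]
    exact (integral_finsetSum _ fun β _ => integrable α β α β).symm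
  simp only [row]
  rw [← integral_finsetSum _ fun α _ => integrable_finsetSum _ fun β _ => by
    simpa only [sq] using integrable α β α β]
  simp [sum_sum_colWedge_sq_of_mem_orthogonalGroup (Subtype.prop _) hij]

lemma wedgeMoment_of_ne [IsProbabilityMeasure μ] [μ.IsMulLeftInvariant] {i j α β : Fin d}
    (hij : i ≠ j) (hαβ : α ≠ β) :
    wedgeMoment μ i j α β α β = 2 / ((d : ℝ) * ((d : ℝ) - 1)) := by
  set c := wedgeMoment μ i j α β α β
  have entries (γ δ : Fin d) : wedgeMoment μ i j γ δ γ δ = c - if γ = δ then c else 0 := by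
    rcases eq_or_ne γ δ with rfl | hγδ
    · simp [wedgeMoment_self_left]
    · simp [hγδ, c, wedgeMoment_eq_of_ne hγδ hαβ]
  have total := sum_sum_wedgeMoment (μ := μ) hij
  simp only [entries, Finset.sum_sub_distrib, Finset.sum_const, Finset.sum_ite_eq, Finset.mem_univ,
    if_true, Finset.card_univ, Fintype.card_fin, nsmul_eq_mul] at total
  have hd : (2 : ℝ) ≤ d := by
    have := α.isLt; have := β.isLt; have := Fin.val_ne_of_ne hαβ
    exact_mod_cast (show 2 ≤ d by omega)
  rw [eq_div_iff (by nlinarith)]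
  linear_combination total

theorem wedgeMoment_eq [IsProbabilityMeasure μ] [μ.IsMulLeftInvariant] {i j : Fin d}
    (hij : i ≠ j) (α β γ δ : Fin d) :
    wedgeMoment μ i j α β γ δ = 2 / ((d : ℝ) * ((d : ℝ) - 1)) *
      ((if α = γ then 1 else 0) * (if β = δ then 1 else 0) -
        (if α = δ then 1 else 0) * (if β = γ then 1 else 0)) := by
  rcases eq_or_ne α β with rfl | hαβ
  · rw [wedgeMoment_self_left]; ring
  by_cases hαγ : α = γ
  · subst hαγ
    by_cases hβδ : β = δ
    · subst hβδ
      simp [wedgeMoment_of_ne hij hαβ, hαβ]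
    · simp [wedgeMoment_eq_zero_of_ne_right hαβ.symm hαβ.symm hβδ, hβδ, hαβ.symm]
  by_cases hαδ : α = δ
  · subst hαδ
    by_cases hβγ : β = γ
    · subst hβγ
      rw [wedgeMoment_swap_right, wedgeMoment_of_ne hij hαβ]
      simp [hαβ]
    · simp [wedgeMoment_eq_zero_of_ne_right hαβ.symm hβγ hαβ.symm, hβγ, hαγ]
  · simp [wedgeMoment_eq_zero_of_ne_left hαβ hαγ hαδ, hαγ, hαδ]

end Moments

theorem stmt_13 (d : ℕ) (hd : 2 ≤ d)
    (μ : Measure (Matrix.orthogonalGroup (Fin d) ℝ)) [IsProbabilityMeasure μ]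
    (hinv : ∀ A : Matrix.orthogonalGroup (Fin d) ℝ,
      μ.map (fun U => A * U) = μ)
    (q : Matrix.orthogonalGroup (Fin d) ℝ → Fin d → Fin d → ℝ)
    (hq : ∀ U α β, q U α β =
      (U : Matrix (Fin d) (Fin d) ℝ) α (Fin.castLE hd 0) *
          (U : Matrix (Fin d) (Fin d) ℝ) β (Fin.castLE hd 1) -
        (U : Matrix (Fin d) (Fin d) ℝ) α (Fin.castLE hd 1) *
          (U : Matrix (Fin d) (Fin d) ℝ) β (Fin.castLE hd 0)) :
    ∀ α β γ δ : Fin d,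
      (∫ U, q U α β * q U γ δ ∂μ)
        = (2 / ((d : ℝ) * ((d : ℝ) - 1))) *
            ((if α = γ then (1 : ℝ) else 0) * (if β = δ then (1 : ℝ) else 0) -
              (if α = δ then (1 : ℝ) else 0) * (if β = γ then (1 : ℝ) else 0)) := by
  have : μ.IsMulLeftInvariant := ⟨hinv⟩
  obtain rfl : q = fun U => U.1.colWedge (Fin.castLE hd 0) (Fin.castLE hd 1) := funext₃ hq
  have h01 : Fin.castLE hd 0 ≠ Fin.castLE hd 1 := by simp [Fin.ext_iff]
  exact wedgeMoment_eq h01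
end
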